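/- arXiv:2211.14778 — 3 statements merged into one kernel-verified Lean document; each statement's English description precedes it below -/
import Mathlib

section
/- Let G be a finite group and x, y ∈ G elements whose orders are powers of the same prime p with o(x) ≤ o(y). Then, in the power graph of G, N[x] ⊇ N[y] if and only if x is a power of y. -/
/-- Closed neighbourhood of a vertex. -/
def closedNbhd {V : Type*} (Γ : SimpleGraph V) (x : V) : Set V := {y | Γ.Adj x y} ∪ {x}

/-- Closed neighbourhood of a set of vertices (intersection convention; N[∅] = univ). -/
def closedNbhdSet {V : Type*} (Γ : SimpleGraph V) (X : Set V) : Set V :=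
  ⋂ x ∈ X, closedNbhd Γ x

/-- Neighbourhood closure X̂ = N[N[X]]. -/
def nbhdClosure {V : Type*} (Γ : SimpleGraph V) (X : Set V) : Set V :=
  closedNbhdSet Γ (closedNbhdSet Γ X)

/-- Closed twin class of a vertex. -/
def twinClass {V : Type*} (Γ : SimpleGraph V) (y : V) : Set V :=
  {x | closedNbhd Γ x = closedNbhd Γ y}

/-- The power graph of a group. -/
def powerGraph (G : Type*) [Group G] : SimpleGraph G where
  Adj x y := x ≠ y ∧ ((∃ m : ℕ, 0 < m ∧ y = x ^ m) ∨ (∃ m : ℕ, 0 < m ∧ x = y ^ m))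
  symm := ⟨by rintro x y ⟨h, h2⟩; exact ⟨h.symm, h2.symm⟩⟩
  loopless := ⟨by rintro x ⟨h, _⟩; exact h rfl⟩

/-- The ⋄-class of an element: elements generating the same cyclic subgroup. -/
def diamondClass {G : Type*} [Group G] (y : G) : Set G :=
  {x | Subgroup.zpowers x = Subgroup.zpowers y}

/-!
In a finite group, `x` is a positive power of `y` iff `x ∈ ⟨y⟩`, so `N[x]` consists of the
elements `z` with `x ∈ ⟨z⟩` or `z ∈ ⟨x⟩`.

If `N[y] ⊆ N[x]` then `y ∈ N[x]`; when `y ∈ ⟨x⟩` the bound `o(x) ≤ o(y)` forces `⟨y⟩ = ⟨x⟩`,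
so in either case `x ∈ ⟨y⟩`. Conversely, if `x ∈ ⟨y⟩` and `z ∈ N[y]`, then either `y ∈ ⟨z⟩`,
whence `x ∈ ⟨z⟩`, or `z ∈ ⟨y⟩`; in the latter case `x` and `z` lie in the cyclic `p`-group `⟨y⟩`,
whose subgroups form a chain, so one of them is a power of the other.
-/

open Subgroup

lemma dvd_or_dvd_of_dvd_prime_pow {p b m n : ℕ} (hp : p.Prime) (hm : m ∣ p ^ b)
    (hn : n ∣ p ^ b) : m ∣ n ∨ n ∣ m := by
  obtain ⟨i, -, rfl⟩ := (Nat.dvd_prime_pow hp).1 hm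
  obtain ⟨j, -, rfl⟩ := (Nat.dvd_prime_pow hp).1 hn
  exact (le_total i j).imp (pow_dvd_pow p) (pow_dvd_pow p)

section Group

variable {G : Type*} [Group G]

lemma pow_mem_zpowers_pow_of_gcd_dvd (y : G) {k m : ℕ} (h : (orderOf y).gcd k ∣ m) :
    y ^ m ∈ zpowers (y ^ k) := by
  obtain ⟨c, rfl⟩ := h
  rw [pow_mul]
  refine pow_mem (mem_zpowers_iff.2 ⟨(orderOf y).gcdB k, ?_⟩) c
  -- Bézout: `gcd(o(y), k) = o(y) A + k B`, and `y ^ o(y) = 1`.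
  calc (y ^ k) ^ (orderOf y).gcdB k
      = (y ^ orderOf y) ^ (orderOf y).gcdA k * (y ^ k) ^ (orderOf y).gcdB k := by
        rw [pow_orderOf_eq_one, one_zpow, one_mul]
    _ = y ^ ((orderOf y : ℤ) * (orderOf y).gcdA k + k * (orderOf y).gcdB k) := by
        rw [zpow_add, zpow_mul, zpow_mul, zpow_natCast, zpow_natCast]
    _ = y ^ (orderOf y).gcd k := by rw [← Nat.gcd_eq_gcd_ab, zpow_natCast]

lemma mem_zpowers_or_mem_zpowers_of_orderOf_eq_prime_pow {p b : ℕ} (hp : p.Prime) {y u v : G}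
    (hy : orderOf y = p ^ b) (hu : u ∈ zpowers y) (hv : v ∈ zpowers y) :
    u ∈ zpowers v ∨ v ∈ zpowers u := by
  have hfin : IsOfFinOrder y := orderOf_pos_iff.1 (hy ▸ pow_pos hp.pos b)
  obtain ⟨i, rfl⟩ : ∃ i : ℕ, y ^ i = u := hfin.mem_powers_iff_mem_zpowers.2 hu
  obtain ⟨j, rfl⟩ : ∃ j : ℕ, y ^ j = v := hfin.mem_powers_iff_mem_zpowers.2 hv
  rcases dvd_or_dvd_of_dvd_prime_pow hp ((Nat.gcd_dvd_left _ i).trans (dvd_of_eq hy))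
    ((Nat.gcd_dvd_left _ j).trans (dvd_of_eq hy)) with hij | hji
  · exact Or.inr (pow_mem_zpowers_pow_of_gcd_dvd y (hij.trans (Nat.gcd_dvd_right _ j)))
  · exact Or.inl (pow_mem_zpowers_pow_of_gcd_dvd y (hji.trans (Nat.gcd_dvd_right _ i)))

end Group

section Finite

variable {G : Type*} [Group G] [Finite G]

lemma exists_pos_pow_eq_iff_mem_zpowers {x y : G} :
    (∃ m : ℕ, 0 < m ∧ x = y ^ m) ↔ x ∈ zpowers y := by
  constructor
  · rintro ⟨m, -, rfl⟩
    exact pow_mem (mem_zpowers y) m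
  · intro h
    obtain ⟨k, rfl⟩ : ∃ k : ℕ, y ^ k = x :=
      (isOfFinOrder_of_finite y).mem_powers_iff_mem_zpowers.2 h
    rcases Nat.eq_zero_or_pos k with rfl | hk
    · exact ⟨orderOf y, orderOf_pos y, by rw [pow_zero, pow_orderOf_eq_one]⟩
    · exact ⟨k, hk, rfl⟩

lemma mem_closedNbhd_powerGraph_iff {x z : G} :
    z ∈ closedNbhd (powerGraph G) x ↔ x ∈ zpowers z ∨ z ∈ zpowers x := by
  simp only [closedNbhd, powerGraph, Set.mem_union, Set.mem_ofPred_eq, Set.mem_singleton_iff,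
    exists_pos_pow_eq_iff_mem_zpowers]
  by_cases h : x = z
  · simp [h, mem_zpowers]
  · simp [h, Ne.symm h, or_comm]

lemma mem_zpowers_of_closedNbhd_subset {x y : G} (hle : orderOf x ≤ orderOf y)
    (h : closedNbhd (powerGraph G) y ⊆ closedNbhd (powerGraph G) x) : x ∈ zpowers y := by
  rcases mem_closedNbhd_powerGraph_iff.1 (h (Or.inr rfl)) with hxy | hyx
  · exact hxy
  · have hcard : Nat.card (zpowers x) ≤ Nat.card (zpowers y) := by
      rwa [Nat.card_zpowers, Nat.card_zpowers]
    rw [eq_of_le_of_card_ge (zpowers_le.2 hyx) hcard]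
    exact mem_zpowers x

lemma closedNbhd_subset_of_mem_zpowers {p b : ℕ} (hp : p.Prime) {x y : G}
    (hy : orderOf y = p ^ b) (hxy : x ∈ zpowers y) :
    closedNbhd (powerGraph G) y ⊆ closedNbhd (powerGraph G) x := by
  intro z hz
  rw [mem_closedNbhd_powerGraph_iff] at hz ⊢
  rcases hz with hyz | hzy
  · exact Or.inl (zpowers_le.2 hyz hxy)
  · exact mem_zpowers_or_mem_zpowers_of_orderOf_eq_prime_pow hp hy hxy hzy

end Finite

theorem stmt8_general {G : Type*} [Group G] [Fintype G] (p : ℕ) (hp : p.Prime) (x y : G)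
    (hy : ∃ b : ℕ, orderOf y = p ^ b)
    (hle : orderOf x ≤ orderOf y) :
    closedNbhd (powerGraph G) y ⊆ closedNbhd (powerGraph G) x ↔
      ∃ m : ℕ, 0 < m ∧ x = y ^ m := by
  obtain ⟨b, hy⟩ := hy
  rw [exists_pos_pow_eq_iff_mem_zpowers]
  exact ⟨mem_zpowers_of_closedNbhd_subset hle, closedNbhd_subset_of_mem_zpowers hp hy⟩

theorem stmt8 {G : Type*} [Group G] [Fintype G] (p : ℕ) (hp : p.Prime) (x y : G)
    (hx : ∃ a : ℕ, orderOf x = p ^ a) (hy : ∃ b : ℕ, orderOf y = p ^ b)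
    (hle : orderOf x ≤ orderOf y) :
    closedNbhd (powerGraph G) y ⊆ closedNbhd (powerGraph G) x ↔
      ∃ m : ℕ, 0 < m ∧ x = y ^ m :=
  stmt8_general p hp x y hy hle
end

section
/- Let G be a finite group and C a closed twin class of P(G) of plain type (a single ⋄-class) such that |C| = p^r − p^s and |Ĉ| = p^r for some prime p and integers r ≥ 2, 0 ≤ s ≤ r−2. Then Ĉ = C ∪ {1} (disjoint union), s = 0, and C = [y]_⋄ for some y ∈ G with o(y) > 1 not a prime power and φ(o(y)) = p^r − 1. -/
open Subgroup

section ClosedNbhd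

variable {V : Type*} (Γ : SimpleGraph V)

lemma mem_closedNbhd_comm {x y : V} : y ∈ closedNbhd Γ x ↔ x ∈ closedNbhd Γ y := by
  simp only [closedNbhd, Set.mem_union, Set.mem_ofPred_eq, Set.mem_singleton_iff, Γ.adj_comm,
    eq_comm]

lemma mem_closedNbhdSet_iff_subset {X : Set V} {z : V} :
    z ∈ closedNbhdSet Γ X ↔ X ⊆ closedNbhd Γ z := by
  simp only [closedNbhdSet, Set.mem_iInter₂]
  exact forall₂_congr fun _ _ => mem_closedNbhd_comm Γ

lemma closedNbhdSet_twinClass (w : V) : closedNbhdSet Γ (twinClass Γ w) = closedNbhd Γ w := by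
  ext z
  simp only [closedNbhdSet, twinClass, Set.mem_iInter₂, Set.mem_ofPred_eq]
  exact ⟨fun h => h w rfl, fun h x hx => hx ▸ h⟩

lemma mem_nbhdClosure_twinClass {w z : V} :
    z ∈ nbhdClosure Γ (twinClass Γ w) ↔ closedNbhd Γ w ⊆ closedNbhd Γ z := by
  rw [nbhdClosure, closedNbhdSet_twinClass, mem_closedNbhdSet_iff_subset]

end ClosedNbhd

lemma Nat.isPrimePow_of_forall_dvd_or_dvd {n d : ℕ} (hn : n ≠ 0) (hdn : d ∣ n) (hd1 : d ≠ 1)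
    (hd : d ≠ n) (h : ∀ e, e ∣ n → e ∣ d ∨ d ∣ e) : IsPrimePow n := by
  have hq : d.minFac.Prime := Nat.minFac_prime hd1
  obtain ⟨k, m, hqm, rfl⟩ := Nat.exists_eq_pow_mul_and_not_dvd hn _ hq.one_lt.ne'
  have hcop : Nat.Coprime (d.minFac ^ k) m :=
    ((Nat.Prime.coprime_iff_not_dvd hq).mpr hqm).pow_left k
  have hmd : m ∣ d := (h m (dvd_mul_left m _)).resolve_right
    fun hdm => hqm ((Nat.minFac_dvd d).trans hdm)
  have hdq : d ∣ d.minFac ^ k := (h _ (dvd_mul_right _ m)).resolve_left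
    fun hqd => hd (Nat.dvd_antisymm hdn (hcop.mul_dvd_of_dvd_of_dvd hqd hmd))
  obtain rfl : m = 1 := hcop.symm.eq_one_of_dvd (hmd.trans hdq)
  have hk : 0 < k := Nat.pos_of_ne_zero fun hk => hd1 (by simpa [hk] using hdq)
  exact ⟨d.minFac, k, hq.prime, hk, (mul_one _).symm⟩

lemma Nat.totient_prime_pow_ne_sub_pow {p r s : ℕ} (hp : p.Prime) (hsr : s + 2 ≤ r) :
    (p ^ r).totient ≠ p ^ r - p ^ s := by
  obtain ⟨k, rfl⟩ : ∃ k, r = k + 1 := ⟨r - 1, by omega⟩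
  rw [Nat.totient_prime_pow_succ hp, pow_succ, Nat.mul_sub_one]
  have hsk : p ^ s < p ^ k := Nat.pow_lt_pow_right hp.one_lt (by omega)
  have hkp : p ^ k * 2 ≤ p ^ k * p := Nat.mul_le_mul_left _ hp.two_le
  omega

section Cyclic

variable {G : Type*} [Group G]

lemma ncard_zpowers (w : G) : (zpowers w : Set G).ncard = orderOf w := by
  rw [← Nat.card_coe_set_eq, SetLike.coe_sort_coe, Nat.card_zpowers]

variable [Finite G]

lemma mem_zpowers_iff_exists_pos_pow {x z : G} :
    z ∈ zpowers x ↔ ∃ m : ℕ, 0 < m ∧ z = x ^ m := by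
  refine ⟨fun h => ?_, fun ⟨m, _, hm⟩ => hm ▸ npow_mem_zpowers x m⟩
  obtain ⟨m, rfl⟩ := mem_powers_iff_mem_zpowers.mpr h
  refine ⟨m + orderOf x, by have := orderOf_pos x; omega, ?_⟩
  rw [pow_add, pow_orderOf_eq_one, mul_one]

lemma zpowers_eq_of_mem_of_orderOf_eq {u x : G} (hx : x ∈ zpowers u)
    (h : orderOf x = orderOf u) : zpowers x = zpowers u :=
  eq_of_le_of_card_ge (zpowers_le.mpr hx) (by rw [Nat.card_zpowers, Nat.card_zpowers, h])

lemma mem_zpowers_pow_div_of_pow_eq_one {w x : G} {d : ℕ} (hx : x ∈ zpowers w)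
    (hd : d ∣ orderOf w) (h : x ^ d = 1) : x ∈ zpowers (w ^ (orderOf w / d)) := by
  obtain ⟨a, rfl⟩ := mem_powers_iff_mem_zpowers.mpr hx
  have hd0 : 0 < d := Nat.pos_of_dvd_of_pos hd (orderOf_pos w)
  have hdiv : orderOf w / d ∣ a := by
    refine Nat.dvd_of_mul_dvd_mul_right hd0 ?_
    rw [Nat.div_mul_cancel hd]
    exact orderOf_dvd_of_pow_eq_one (by rw [pow_mul, h])
  obtain ⟨c, rfl⟩ := hdiv
  show w ^ (orderOf w / d * c) ∈ _
  rw [pow_mul]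
  exact npow_mem_zpowers _ c

lemma mem_zpowers_of_orderOf_dvd {w y z : G} (hy : y ∈ zpowers w) (hz : z ∈ zpowers w)
    (h : orderOf y ∣ orderOf z) : y ∈ zpowers z := by
  have hzw : orderOf z ∣ orderOf w := orderOf_dvd_of_mem_zpowers hz
  have killed : ∀ x ∈ zpowers w, orderOf x ∣ orderOf z →
      x ∈ zpowers (w ^ (orderOf w / orderOf z)) := fun x hx hxz =>
    mem_zpowers_pow_div_of_pow_eq_one hx hzw (orderOf_dvd_iff_pow_eq_one.mp hxz)
  rw [zpowers_eq_of_mem_of_orderOf_eq (killed z hz dvd_rfl)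
    (orderOf_pow_orderOf_div (orderOf_pos w).ne' hzw).symm]
  exact killed y hy h

end Cyclic

section DiamondClass

variable {G : Type*} [Group G]

lemma diamondClass_one : diamondClass (1 : G) = {1} := by
  ext x
  simp [diamondClass, zpowers_eq_bot]

lemma disjoint_diamondClass {x y : G} (h : zpowers x ≠ zpowers y) :
    Disjoint (diamondClass x) (diamondClass y) :=
  Set.disjoint_left.mpr fun _ hx hy => h (hx.symm.trans hy)

variable [Finite G]

lemma mem_diamondClass_iff {u x : G} :
    x ∈ diamondClass u ↔ x ∈ zpowers u ∧ orderOf x = orderOf u := by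
  refine ⟨fun h => ⟨h ▸ mem_zpowers x, ?_⟩,
    fun h => zpowers_eq_of_mem_of_orderOf_eq h.1 h.2⟩
  rw [← Nat.card_zpowers, ← Nat.card_zpowers, show zpowers x = zpowers u from h]

lemma ncard_diamondClass (u : G) : (diamondClass u).ncard = (orderOf u).totient := by
  classical
  have : Fintype (zpowers u) := Fintype.ofFinite _
  have himage : diamondClass u = Subtype.val '' {x : zpowers u | orderOf x = orderOf u} := by
    ext x
    refine ⟨fun h => ?_, fun ⟨y, hy, hyx⟩ => ?_⟩
    · obtain ⟨hx, hord⟩ := mem_diamondClass_iff.mp h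
      exact ⟨⟨x, hx⟩, (orderOf_mk x hx).trans hord, rfl⟩
    · exact hyx ▸ mem_diamondClass_iff.mpr ⟨y.2, (orderOf_coe y).trans hy⟩
  rw [himage, Set.ncard_image_of_injective _ Subtype.val_injective, Set.ncard_eq_toFinset_card',
    Set.toFinset_ofPred,
    IsCyclic.card_orderOf_eq_totient (by rw [← Nat.card_eq_fintype_card, Nat.card_zpowers])]

lemma totient_add_totient_add_one_le_ncard {T : Set G} {x y : G} (hx : diamondClass x ⊆ T)
    (hy : diamondClass y ⊆ T) (h1 : (1 : G) ∈ T) (hxy : zpowers x ≠ zpowers y) (hx1 : x ≠ 1)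
    (hy1 : y ≠ 1) : (orderOf x).totient + (orderOf y).totient + 1 ≤ T.ncard := by
  have hne_one : ∀ {u : G}, u ≠ 1 → zpowers u ≠ zpowers 1 := by
    intro u hu
    rwa [zpowers_one_eq_bot, Ne, zpowers_eq_bot]
  have hdisj : Disjoint (diamondClass x ∪ diamondClass y) (diamondClass 1) :=
    Set.disjoint_union_left.mpr
      ⟨disjoint_diamondClass (hne_one hx1), disjoint_diamondClass (hne_one hy1)⟩
  calc (orderOf x).totient + (orderOf y).totient + 1
      = (diamondClass x ∪ diamondClass y ∪ diamondClass 1).ncard := by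
        rw [Set.ncard_union_eq hdisj, Set.ncard_union_eq (disjoint_diamondClass hxy),
          ncard_diamondClass, ncard_diamondClass, ncard_diamondClass, orderOf_one,
          Nat.totient_one]
    _ ≤ T.ncard := Set.ncard_le_ncard <| Set.union_subset (Set.union_subset hx hy)
        (diamondClass_one (G := G) ▸ Set.singleton_subset_iff.mpr h1)

end DiamondClass

section PowerGraph

variable {G : Type*} [Group G] [Finite G]

lemma mem_closedNbhd_powerGraph {x z : G} :
    z ∈ closedNbhd (powerGraph G) x ↔ z ∈ zpowers x ∨ x ∈ zpowers z := by
  simp only [closedNbhd, powerGraph, Set.mem_union, Set.mem_ofPred_eq, Set.mem_singleton_iff,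
    ← mem_zpowers_iff_exists_pos_pow]
  by_cases hzx : z = x
  · simp [hzx, mem_zpowers]
  · simp [hzx, Ne.symm hzx]

lemma closedNbhd_powerGraph_congr {x y : G} (h : zpowers x = zpowers y) :
    closedNbhd (powerGraph G) x = closedNbhd (powerGraph G) y := by
  ext z
  simp only [mem_closedNbhd_powerGraph, ← zpowers_le, h]

variable {w z : G}

lemma one_mem_nbhdClosure_twinClass :
    (1 : G) ∈ nbhdClosure (powerGraph G) (twinClass (powerGraph G) w) :=
  (mem_nbhdClosure_twinClass _).mpr fun _ _ => mem_closedNbhd_powerGraph.mpr (Or.inr (one_mem _))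

lemma diamondClass_subset_nbhdClosure_twinClass
    (hz : z ∈ nbhdClosure (powerGraph G) (twinClass (powerGraph G) w)) :
    diamondClass z ⊆ nbhdClosure (powerGraph G) (twinClass (powerGraph G) w) := fun _ hx =>
  (mem_nbhdClosure_twinClass _).mpr
    (closedNbhd_powerGraph_congr hx ▸ (mem_nbhdClosure_twinClass _).mp hz)

lemma nbhdClosure_twinClass_subset_zpowers (hw : w ≠ 1)
    (hT : (nbhdClosure (powerGraph G) (twinClass (powerGraph G) w)).ncard <
      2 * (orderOf w).totient + 1) :
    nbhdClosure (powerGraph G) (twinClass (powerGraph G) w) ⊆ zpowers w := by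
  intro z hz
  have hz_nbhd : z ∈ closedNbhd (powerGraph G) w := (mem_closedNbhd_comm _).mp
    ((mem_nbhdClosure_twinClass _).mp hz (Or.inr rfl))
  refine (mem_closedNbhd_powerGraph.mp hz_nbhd).elim id fun hwz => ?_
  by_contra hzw
  have hne : zpowers z ≠ zpowers w := fun h => hzw (h ▸ mem_zpowers z)
  have hz1 : z ≠ 1 := by rintro rfl; exact hzw (one_mem _)
  have hφ : (orderOf w).totient ≤ (orderOf z).totient :=
    Nat.le_of_dvd (Nat.totient_pos.mpr (orderOf_pos z))
      (Nat.totient_dvd_of_dvd (orderOf_dvd_of_mem_zpowers hwz))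
  have := totient_add_totient_add_one_le_ncard (diamondClass_subset_nbhdClosure_twinClass
    ((mem_nbhdClosure_twinClass _).mpr le_rfl)) (diamondClass_subset_nbhdClosure_twinClass hz)
    one_mem_nbhdClosure_twinClass hne.symm hw hz1
  omega

lemma zpowers_subset_nbhdClosure_twinClass (h : IsPrimePow (orderOf w)) :
    (zpowers w : Set G) ⊆ nbhdClosure (powerGraph G) (twinClass (powerGraph G) w) := by
  obtain ⟨q, k, hq, -, hqk⟩ := h
  have hq : q.Prime := Nat.prime_iff.mpr hq
  have hord : ∀ x ∈ zpowers w, ∃ a, orderOf x = q ^ a := fun x hx =>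
    ((Nat.dvd_prime_pow hq).mp (hqk ▸ orderOf_dvd_of_mem_zpowers hx)).imp fun _ h => h.2
  intro x hx
  refine (mem_nbhdClosure_twinClass _).mpr fun y hy => mem_closedNbhd_powerGraph.mpr ?_
  rcases mem_closedNbhd_powerGraph.mp hy with hy | hwy
  · obtain ⟨a, ha⟩ := hord y hy
    obtain ⟨b, hb⟩ := hord x hx
    rcases le_total a b with hab | hab
    · exact Or.inl (mem_zpowers_of_orderOf_dvd hy hx (ha ▸ hb ▸ pow_dvd_pow q hab))
    · exact Or.inr (mem_zpowers_of_orderOf_dvd hx hy (ha ▸ hb ▸ pow_dvd_pow q hab))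
  · exact Or.inr (zpowers_le.mpr hwy hx)

lemma dvd_or_dvd_orderOf_of_mem_nbhdClosure_twinClass
    (hz : z ∈ nbhdClosure (powerGraph G) (twinClass (powerGraph G) w)) {e : ℕ}
    (he : e ∣ orderOf w) : e ∣ orderOf z ∨ orderOf z ∣ e := by
  have hy : orderOf (w ^ (orderOf w / e)) = e := orderOf_pow_orderOf_div (orderOf_pos w).ne' he
  have := (mem_nbhdClosure_twinClass _).mp hz
    (mem_closedNbhd_powerGraph.mpr (Or.inl (npow_mem_zpowers w (orderOf w / e))))
  rcases mem_closedNbhd_powerGraph.mp this with h | h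
  · exact Or.inl (hy ▸ orderOf_dvd_of_mem_zpowers h)
  · exact Or.inr (hy ▸ orderOf_dvd_of_mem_zpowers h)

lemma nbhdClosure_twinClass_eq_of_not_isPrimePow
    (hT : nbhdClosure (powerGraph G) (twinClass (powerGraph G) w) ⊆ zpowers w)
    (h : ¬ IsPrimePow (orderOf w)) :
    nbhdClosure (powerGraph G) (twinClass (powerGraph G) w) = diamondClass w ∪ {1} := by
  refine subset_antisymm (fun z hz => ?_) (Set.union_subset
    (diamondClass_subset_nbhdClosure_twinClass ((mem_nbhdClosure_twinClass _).mpr le_rfl))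
    (Set.singleton_subset_iff.mpr one_mem_nbhdClosure_twinClass))
  by_contra hzC
  simp only [Set.mem_union, Set.mem_singleton_iff, not_or] at hzC
  refine h (Nat.isPrimePow_of_forall_dvd_or_dvd (orderOf_pos w).ne'
    (orderOf_dvd_of_mem_zpowers (hT hz)) (mt orderOf_eq_one_iff.mp hzC.2) (fun hzw => hzC.1 ?_)
    fun e he => dvd_or_dvd_orderOf_of_mem_nbhdClosure_twinClass hz he)
  exact zpowers_eq_of_mem_of_orderOf_eq (hT hz) hzw

end PowerGraph

theorem stmt13 {G : Type*} [Group G] [Fintype G] (C : Set G) (w : G)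
    (hC : C = twinClass (powerGraph G) w) (hplain : C = diamondClass w)
    (p r s : ℕ) (hp : p.Prime) (hr : 2 ≤ r) (hs : s ≤ r - 2)
    (hcard : C.ncard = p ^ r - p ^ s)
    (hclcard : (nbhdClosure (powerGraph G) C).ncard = p ^ r) :
    nbhdClosure (powerGraph G) C = C ∪ {1} ∧ (1 : G) ∉ C ∧ s = 0 ∧
      ∃ y : G, C = diamondClass y ∧ 1 < orderOf y ∧ ¬ IsPrimePow (orderOf y) ∧
        (orderOf y).totient = p ^ r - 1 := by
  have hsr : s + 2 ≤ r := by omega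
  have hps : 4 * p ^ s ≤ p ^ r := calc
    4 * p ^ s ≤ p ^ 2 * p ^ s := Nat.mul_le_mul_right _ (by nlinarith [hp.two_le])
    _ ≤ p ^ r := by rw [← pow_add]; exact Nat.pow_le_pow_right hp.pos (by omega)
  have hφ : (orderOf w).totient = p ^ r - p ^ s := by
    rw [← ncard_diamondClass, ← hplain, hcard]
  have hw : w ≠ 1 := by
    rintro rfl
    rw [orderOf_one, Nat.totient_one] at hφ
    have := Nat.one_le_pow s p hp.pos
    omega
  subst hC
  have hTw := nbhdClosure_twinClass_subset_zpowers hw (by omega)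
  have hnpp : ¬ IsPrimePow (orderOf w) := fun h => by
    have hn : orderOf w = p ^ r := by
      rw [← hclcard, hTw.antisymm (zpowers_subset_nbhdClosure_twinClass h), ncard_zpowers]
    exact Nat.totient_prime_pow_ne_sub_pow hp hsr (hn ▸ hφ)
  have hT := nbhdClosure_twinClass_eq_of_not_isPrimePow hTw hnpp
  have h1C : (1 : G) ∉ diamondClass w := fun h => hw (zpowers_eq_bot.mp (by
    rw [← h, zpowers_one_eq_bot]))
  have hps1 : p ^ s = 1 := by
    rw [hT, Set.ncard_union_eq (Set.disjoint_singleton_right.mpr h1C), ncard_diamondClass,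
      Set.ncard_singleton] at hclcard
    omega
  rw [← hplain] at hT h1C
  refine ⟨hT, h1C, (Nat.pow_eq_one.mp hps1).resolve_left hp.one_lt.ne', w, hplain, ?_, hnpp, ?_⟩
  · exact lt_of_le_of_ne (orderOf_pos w) (Ne.symm (mt orderOf_eq_one_iff.mp hw))
  · omega
end

section
/- Let G be a finite group and X, Y two distinct ⋄-classes of G. If there exist x ∈ X and y ∈ Y with y a power of x, then for every x' ∈ X and y' ∈ Y, y' is a power of x', and no element of X is a power of any element of Y. -/
/-! In a finite group, `y` is a positive power of `x` exactly when `⟨y⟩ ≤ ⟨x⟩`, since a negative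
exponent can be shifted by a multiple of the order of `x`. A ⋄-class is determined by its cyclic
subgroup, so the hypothesis gives `⟨y₀⟩ ≤ ⟨x₀⟩` for all representatives at once, and a power relation
the other way would force `⟨x₀⟩ = ⟨y₀⟩`, i.e. `X = Y`. -/

open Subgroup

lemma IsOfFinOrder.exists_pos_pow_eq_of_mem_zpowers {G : Type*} [Group G] {x y : G}
    (hx : IsOfFinOrder x) (hy : y ∈ zpowers x) : ∃ m : ℕ, 0 < m ∧ y = x ^ m := by
  obtain ⟨n, rfl⟩ := hx.mem_powers_iff_mem_zpowers.mpr hy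
  rcases Nat.eq_zero_or_pos n with rfl | hn
  · exact ⟨orderOf x, hx.orderOf_pos, by simp [pow_orderOf_eq_one]⟩
  · exact ⟨n, hn, rfl⟩

lemma exists_pos_pow_eq_iff_zpowers_le {G : Type*} [Group G] [Finite G] {x y : G} :
    (∃ m : ℕ, 0 < m ∧ y = x ^ m) ↔ zpowers y ≤ zpowers x := by
  rw [zpowers_le]
  constructor
  · rintro ⟨m, -, rfl⟩
    exact pow_mem (mem_zpowers x) m
  · exact (isOfFinOrder_of_finite x).exists_pos_pow_eq_of_mem_zpowers

lemma diamondClass_eq_iff {G : Type*} [Group G] {x y : G} :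
    diamondClass x = diamondClass y ↔ zpowers x = zpowers y := by
  refine ⟨fun h ↦ ?_, fun h ↦ by simp only [diamondClass, h]⟩
  change x ∈ diamondClass y
  exact h ▸ rfl

theorem stmt17 {G : Type*} [Group G] [Fintype G] (x0 y0 : G)
    (hXY : diamondClass x0 ≠ diamondClass y0)
    (h : ∃ x ∈ diamondClass x0, ∃ y ∈ diamondClass y0, ∃ m : ℕ, 0 < m ∧ y = x ^ m) :
    (∀ x' ∈ diamondClass x0, ∀ y' ∈ diamondClass y0, ∃ m : ℕ, 0 < m ∧ y' = x' ^ m) ∧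
      (∀ x' ∈ diamondClass x0, ∀ y' ∈ diamondClass y0, ¬ ∃ m : ℕ, 0 < m ∧ x' = y' ^ m) := by
  obtain ⟨x, hx, y, hy, hyx⟩ := h
  have hle : zpowers y0 ≤ zpowers x0 := by
    rw [← hx, ← hy]
    exact exists_pos_pow_eq_iff_zpowers_le.mp hyx
  refine ⟨fun x' hx' y' hy' ↦ ?_, fun x' hx' y' hy' hxy' ↦ ?_⟩
  · rw [exists_pos_pow_eq_iff_zpowers_le, hx', hy']
    exact hle
  · rw [exists_pos_pow_eq_iff_zpowers_le, hx', hy'] at hxy'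
    exact hXY (diamondClass_eq_iff.mpr (le_antisymm hxy' hle))
end
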